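/- arXiv:1909.00952 — 2 statements merged into one kernel-verified Lean document; each statement's English description precedes it below -/
import Mathlib

section
/- Let n ≥ 2, c > 0, and let L_u be the n×n Laplacian of the uniformly weighted line graph. For every integer k with 1 ≤ k ≤ n, the vector v_k ∈ ℝⁿ with entries v_k(j) = sin(j(2k−1)π/(2n+1)) for j = 1, …, n satisfies (L_u + c·e₁e₁ᵀ) v_k = 2c(1 − cos((2k−1)π/(2n+1))) v_k. Hence the DST-7 basis vectors are eigenvectors of the generalized graph Laplacian of the line graph with a self-loop of weight c at the first vertex. -/
/-!
Extend the eigenvector to all of `ℕ` by `f m = sin (m θ)` with `θ = (2k−1)π/(2n+1)`. The rows of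
`L_u + c e₁e₁ᵀ` act as the second difference `c (2 f(m) − f(m−1) − f(m+1))` once two ghost values
are in place: the self-loop at the first vertex makes its row look interior because `f 0 = 0`,
and the last row looks interior because `(2n+1)θ` is an odd multiple of `π`, which makes
`f (n+1) = f n`. Finally `sin (x − θ) + sin (x + θ) = 2 cos θ sin x` shows that `f` is an
eigenfunction of the second difference with eigenvalue `2c(1 − cos θ)`.
-/

open Matrix Real

/-- The combinatorial Laplacian of the uniformly weighted line graph on `n` vertices with
edge weight `c`. -/
def lineLaplacian (n : ℕ) (c : ℝ) : Matrix (Fin n) (Fin n) ℝ :=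
  Matrix.of fun i j =>
    if i = j then (if i.val = 0 ∨ i.val = n - 1 then c else 2 * c)
    else if i.val + 1 = j.val ∨ j.val + 1 = i.val then -c else 0

theorem lineLaplacian_add_single_apply_of_val_eq_zero {n : ℕ} (hn : 2 ≤ n) (c : ℝ)
    {v₀ : Fin n} (hv₀ : (v₀ : ℕ) = 0) (i j : Fin n) :
    (lineLaplacian n c + single v₀ v₀ c) i j =
      (if (j : ℕ) = i then (if (i : ℕ) = n - 1 then c else 2 * c) else 0) -
        (if (j : ℕ) = i + 1 then c else 0) - (if (j : ℕ) + 1 = i then c else 0) := by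
  have := i.isLt
  simp only [Matrix.add_apply, lineLaplacian, of_apply, single_apply, Fin.ext_iff, hv₀]
  split_ifs <;> first | omega | ring

theorem lineLaplacian_add_single_mulVec_apply_of_val_eq_zero {n : ℕ} (hn : 2 ≤ n) (c : ℝ)
    {v₀ : Fin n} (hv₀ : (v₀ : ℕ) = 0) {f : ℕ → ℝ} (hf₀ : f 0 = 0) (hfn : f (n + 1) = f n)
    (i : Fin n) :
    ((lineLaplacian n c + single v₀ v₀ c) *ᵥ fun j : Fin n => f (j + 1)) i =
      c * (2 * f (i + 1) - f i - f (i + 2)) := by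
  have hi := i.isLt
  simp only [mulVec, dotProduct, lineLaplacian_add_single_apply_of_val_eq_zero hn c hv₀]
  rw [Fin.sum_univ_eq_sum_range (fun m => ((if m = i then (if (i : ℕ) = n - 1 then c else 2 * c)
    else 0) - (if m = i + 1 then c else 0) - (if m + 1 = i then c else 0)) * f (m + 1)) n]
  simp only [sub_mul, ite_mul, zero_mul, Finset.sum_sub_distrib, Finset.sum_ite_eq',
    Finset.mem_range, hi, if_true]
  have h_prev : ∑ m ∈ Finset.range n, (if m + 1 = (i : ℕ) then c * f (m + 1) else 0) =
      c * f i := by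
    obtain h | h := Nat.eq_zero_or_eq_succ_pred (i : ℕ)
    · simp [h, hf₀]
    · rw [h]
      simp only [Nat.succ_eq_add_one, Nat.add_right_cancel_iff, Finset.sum_ite_eq',
        Finset.mem_range, if_pos (show (i : ℕ).pred < n by omega)]
  rw [h_prev]
  split_ifs with h_last
  · omega
  · have h_succ : (i : ℕ) + 1 = n := by omega
    rw [show (i : ℕ) + 2 = n + 1 by omega, hfn, h_succ]
    ring
  · ring
  · omega

theorem sin_succ_mul_eq_sin_mul_of_odd_mul_pi {n : ℕ} {k : ℤ} {θ : ℝ}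
    (h : (2 * n + 1) * θ = (2 * k - 1) * π) : sin ((n + 1) * θ) = sin (n * θ) := by
  rw [show (n + 1) * θ = π - n * θ + ((k - 1 : ℤ) : ℝ) * (2 * π) by push_cast; linear_combination h,
    sin_add_int_mul_two_pi, sin_pi_sub]

theorem lineLaplacian_add_single_mulVec_sin_of_val_eq_zero {n : ℕ} (hn : 2 ≤ n) (c : ℝ)
    {v₀ : Fin n} (hv₀ : (v₀ : ℕ) = 0) {k : ℤ} {θ : ℝ} (h : (2 * n + 1) * θ = (2 * k - 1) * π) :
    (lineLaplacian n c + single v₀ v₀ c) *ᵥ (fun j : Fin n => sin (((j : ℝ) + 1) * θ)) =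
      (2 * c * (1 - cos θ)) • fun j : Fin n => sin (((j : ℝ) + 1) * θ) := by
  funext i
  have h_mulVec := lineLaplacian_add_single_mulVec_apply_of_val_eq_zero hn c hv₀
    (f := fun m => sin (m * θ)) (by simp)
    (by exact_mod_cast sin_succ_mul_eq_sin_mul_of_odd_mul_pi h) i
  push_cast at h_mulVec
  rw [h_mulVec, Pi.smul_apply, smul_eq_mul]
  have h_sum := two_mul_sin_mul_cos (((i : ℝ) + 1) * θ) θ
  rw [show ((i : ℝ) + 1) * θ - θ = i * θ by ring, show ((i : ℝ) + 1) * θ + θ = (i + 2) * θ by ring]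
    at h_sum
  linear_combination c * h_sum

/-- DST-7 basis vectors are eigenvectors of the line graph Laplacian with a self-loop of
weight `c` at the first vertex: for `1 ≤ k ≤ n`, the vector with entries
`sin(j(2k−1)π/(2n+1))`, `j = 1, …, n`, is an eigenvector with eigenvalue
`2c(1 − cos((2k−1)π/(2n+1)))`. -/
theorem dst7_eigenvectors (n : ℕ) (hn : 2 ≤ n) (c : ℝ) (k : ℕ) :
    (lineLaplacian n c + Matrix.single (⟨0, by omega⟩ : Fin n) ⟨0, by omega⟩ c) *ᵥ
        (fun j : Fin n =>
          Real.sin (((j : ℝ) + 1) * (2 * (k : ℝ) - 1) * Real.pi / (2 * n + 1))) =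
      (2 * c * (1 - Real.cos ((2 * (k : ℝ) - 1) * Real.pi / (2 * n + 1)))) •
        (fun j : Fin n =>
          Real.sin (((j : ℝ) + 1) * (2 * (k : ℝ) - 1) * Real.pi / (2 * n + 1))) := by
  have h_odd : (2 * n + 1) * ((2 * (k : ℝ) - 1) * π / (2 * n + 1)) =
      (2 * ((k : ℤ) : ℝ) - 1) * π := by
    push_cast
    field_simp
  simpa only [mul_div_assoc, mul_assoc] using
    lineLaplacian_add_single_mulVec_sin_of_val_eq_zero hn c (v₀ := ⟨0, by omega⟩) rfl h_odd
end

section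
/- Let n ≥ 2, c > 0, and let L_u be the n×n Laplacian of the uniformly weighted line graph. For every integer k with 1 ≤ k ≤ n, the vector u_k ∈ ℝⁿ with entries u_k(j) = cos((2j−1)(2k−1)π/(2(2n+1))) for j = 1, …, n satisfies (L_u + c·e_ne_nᵀ) u_k = 2c(1 − cos((2k−1)π/(2n+1))) u_k. Hence the DCT-8 basis vectors are eigenvectors of the generalized graph Laplacian of the line graph with a self-loop of weight c at the last vertex. -/
/-!
Extend the vector to `ℤ` by `u m = cos ((2m + 1) θ)`. The loop-free first vertex acts as the
reflection `u (-1) = u 0`, and the self-loop of weight `c` at the last vertex as the ghost value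
`u n = 0`, so every row of the matrix applies `c` times the second difference
`2 u m - u (m - 1) - u (m + 1)`. For the cosine this is `2 (1 - cos 2θ) u m`, and the choice
`θ = (2k - 1) π / (2 (2n + 1))` makes `u n = cos ((2k - 1) π / 2) = 0`.
-/

open Matrix Real

theorem Fin.sum_ite_intCast_eq_mul {n : ℕ} (m : ℤ) (a : ℝ) (u : ℤ → ℝ) :
    ∑ j : Fin n, (if (j : ℤ) = m then a else 0) * u j =
      if 0 ≤ m ∧ m < n then a * u m else 0 := by
  split_ifs with hm
  · obtain ⟨k, rfl⟩ := Int.eq_ofNat_of_zero_le hm.1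
    rw [Finset.sum_eq_single_of_mem ⟨k, by omega⟩ (Finset.mem_univ _)]
    · simp
    · intro j _ hj
      rw [Ne, Fin.ext_iff] at hj
      rw [if_neg (by simp only at hj; omega), zero_mul]
  · refine Finset.sum_eq_zero fun j _ => ?_
    rw [if_neg (by omega), zero_mul]

theorem lineLaplacian_add_single_last_apply {n : ℕ} (hn : 2 ≤ n) (c : ℝ) {l : Fin n}
    (hl : (l : ℕ) = n - 1) (i j : Fin n) :
    (lineLaplacian n c + single l l c) i j =
      (if (j : ℤ) = i then (if (i : ℤ) = 0 then c else 2 * c) else 0)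
        - (if (j : ℤ) = i - 1 then c else 0) - (if (j : ℤ) = i + 1 then c else 0) := by
  simp only [Matrix.add_apply, lineLaplacian, of_apply, single_apply, Fin.ext_iff]
  split_ifs <;> first | (exfalso; omega) | ring

theorem lineLaplacian_add_single_last_mulVec_apply {n : ℕ} (hn : 2 ≤ n) (c : ℝ) {l : Fin n}
    (hl : (l : ℕ) = n - 1) (u : ℤ → ℝ) (h_first : u (-1) = u 0) (h_last : u n = 0)
    (i : Fin n) :
    ((lineLaplacian n c + single l l c) *ᵥ fun j : Fin n => u j) i =
      c * (2 * u i - u (i - 1) - u (i + 1)) := by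
  simp only [mulVec, dotProduct, lineLaplacian_add_single_last_apply hn c hl, sub_mul,
    Finset.sum_sub_distrib, Fin.sum_ite_intCast_eq_mul]
  have hi := i.isLt
  rcases (show (i : ℤ) = 0 ∨ (i : ℤ) = n - 1 ∨ (0 < (i : ℤ) ∧ (i : ℤ) + 1 < n) by
      omega) with h | h | ⟨h_pos, h_lt⟩
  · rw [if_pos (by omega), if_pos h, if_neg (by omega), if_pos (by omega), h, zero_sub,
      h_first]
    ring
  · rw [if_pos (by omega), if_neg (by omega), if_pos (by omega), if_neg (by omega), h,
      sub_add_cancel, h_last]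
    ring
  · rw [if_pos (by omega), if_neg (by omega), if_pos (by omega), if_pos (by omega)]
    ring

theorem two_mul_cos_sub_cos_sub_cos_odd_mul (θ m : ℝ) :
    2 * cos ((2 * m + 1) * θ) - cos ((2 * (m - 1) + 1) * θ) - cos ((2 * (m + 1) + 1) * θ) =
      2 * (1 - cos (2 * θ)) * cos ((2 * m + 1) * θ) := by
  rw [show (2 * (m - 1) + 1) * θ = (2 * m + 1) * θ - 2 * θ by ring,
    show (2 * (m + 1) + 1) * θ = (2 * m + 1) * θ + 2 * θ by ring, cos_sub, cos_add]
  ring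

theorem lineLaplacian_add_single_last_mulVec_eq_smul {n : ℕ} (hn : 2 ≤ n) (c μ : ℝ)
    {l : Fin n} (hl : (l : ℕ) = n - 1) (u : ℤ → ℝ) (h_first : u (-1) = u 0)
    (h_last : u n = 0) (h_diff : ∀ m : ℤ, 2 * u m - u (m - 1) - u (m + 1) = μ * u m) :
    (lineLaplacian n c + single l l c) *ᵥ (fun j : Fin n => u j) =
      (c * μ) • fun j : Fin n => u j := by
  funext i
  rw [lineLaplacian_add_single_last_mulVec_apply hn c hl u h_first h_last, h_diff, Pi.smul_apply,
    smul_eq_mul, mul_assoc]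

/-- DCT-8 basis vectors are eigenvectors of the line graph Laplacian with a self-loop of weight `c` at the last vertex. For `1 ≤ k ≤ n` the given vector is an eigenvector
with the stated eigenvalue. -/
theorem dct8_eigenvectors (n : ℕ) (hn : 2 ≤ n) (c : ℝ)
    (k : ℕ) :
    (lineLaplacian n c + Matrix.single (⟨n - 1, by omega⟩ : Fin n) ⟨n - 1, by omega⟩ c) *ᵥ
        (fun j : Fin n => Real.cos ((2 * (j : ℝ) + 1) * (2 * (k : ℝ) - 1) * Real.pi / (2 * (2 * n + 1)))) =
      (2 * c * (1 - Real.cos ((2 * (k : ℝ) - 1) * Real.pi / (2 * n + 1)))) •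
        (fun j : Fin n => Real.cos ((2 * (j : ℝ) + 1) * (2 * (k : ℝ) - 1) * Real.pi / (2 * (2 * n + 1)))) := by
  set θ := (2 * (k : ℝ) - 1) * π / (2 * (2 * n + 1)) with hθ
  have h_vec :
      (fun j : Fin n => cos ((2 * (j : ℝ) + 1) * (2 * (k : ℝ) - 1) * π / (2 * (2 * n + 1)))) =
        fun j : Fin n => cos ((2 * ((j : ℤ) : ℝ) + 1) * θ) := by
    funext j
    congr 1
    push_cast
    ring
  have h_val :
      2 * c * (1 - cos ((2 * (k : ℝ) - 1) * π / (2 * n + 1))) =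
        c * (2 * (1 - cos (2 * θ))) := by
    rw [show 2 * θ = (2 * (k : ℝ) - 1) * π / (2 * n + 1) by rw [hθ]; field_simp]
    ring
  rw [h_vec, h_val]
  refine lineLaplacian_add_single_last_mulVec_eq_smul hn c _ rfl
    (fun m : ℤ => cos ((2 * (m : ℝ) + 1) * θ)) ?_ ?_
    fun m => by push_cast; exact two_mul_cos_sub_cos_sub_cos_odd_mul θ m
  · push_cast
    rw [show (2 * (-1 : ℝ) + 1) * θ = -((2 * 0 + 1) * θ) by ring, cos_neg]
  · push_cast
    rw [cos_eq_zero_iff]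
    exact ⟨(k : ℤ) - 1, by rw [hθ]; push_cast; field_simp; ring⟩
end
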